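/- (Brown's correspondence, unit ball case, face-of-hull direction.) Let S^d ⊆ R^{d+1} be the unit sphere, c the north pole, σ the stereographic projection from c onto a hyperplane not through c, and A = {a_1, …, a_n} ⊆ R^d a finite point configuration. Let P_A = conv({c} ∪ σ^{-1}(A)) ⊆ R^{d+1}. Then for every S ⊆ A: conv(σ^{-1}(S) ∪ {c}) is a face of P_A if and only if conv(S) is a face of conv(A). -/

import Mathlib

/-- The inverse stereographic projection σ⁻¹ : ℝ^d → S^d ⊆ ℝ^{d+1} from the north pole
c = e_{d+1}: σ⁻¹(p) = (4p/(‖p‖²+4), (‖p‖²−4)/(‖p‖²+4)). -/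
noncomputable def stereoInv (d : ℕ) (p : EuclideanSpace ℝ (Fin d)) :
    EuclideanSpace ℝ (Fin (d + 1)) :=
  WithLp.toLp 2 (fun i : Fin (d + 1) =>
    if h : (i : ℕ) < d then 4 * p ⟨(i : ℕ), h⟩ / (‖p‖ ^ 2 + 4)
    else (‖p‖ ^ 2 - 4) / (‖p‖ ^ 2 + 4))

lemma stereoInv_last (d : ℕ) (p : EuclideanSpace ℝ (Fin d)) :
    stereoInv d p (Fin.last d) = (‖p‖ ^ 2 - 4) / (‖p‖ ^ 2 + 4) := by
  simp [stereoInv]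

lemma stereoInv_castSucc (d : ℕ) (p : EuclideanSpace ℝ (Fin d)) (i : Fin d) :
    stereoInv d p (Fin.castSucc i) = 4 * p i / (‖p‖ ^ 2 + 4) := by
  simp [stereoInv, i.isLt]

lemma inner_stereoInv (d : ℕ) (p : EuclideanSpace ℝ (Fin d))
    (V : EuclideanSpace ℝ (Fin (d + 1))) :
    (inner ℝ (stereoInv d p) V : ℝ) =
      V (Fin.last d) + (4 / (‖p‖ ^ 2 + 4)) *
        ((inner ℝ p (WithLp.toLp 2 (fun i => V (Fin.castSucc i)) : EuclideanSpace ℝ (Fin d)) : ℝ)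
          - 2 * V (Fin.last d)) := by
  have hN : (0:ℝ) < ‖p‖ ^ 2 + 4 := by positivity
  rw [PiLp.inner_apply, PiLp.inner_apply]
  simp only [RCLike.inner_apply, conj_trivial, PiLp.toLp_apply]
  rw [Fin.sum_univ_castSucc]
  simp only [stereoInv_castSucc, stereoInv_last]
  have h1 : (∑ i : Fin d, V (Fin.castSucc i) * (4 * p i / (‖p‖ ^ 2 + 4)))
      = (4 / (‖p‖ ^ 2 + 4)) * ∑ i : Fin d, V (Fin.castSucc i) * p i := by
    rw [Finset.mul_sum]; apply Finset.sum_congr rfl; intros; ring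
  rw [h1]
  field_simp
  ring

lemma stereoInv_injective (d : ℕ) : Function.Injective (stereoInv d) := by
  intro p q h
  have hNp : (0:ℝ) < ‖p‖ ^ 2 + 4 := by positivity
  have hNq : (0:ℝ) < ‖q‖ ^ 2 + 4 := by positivity
  have hlast : stereoInv d p (Fin.last d) = stereoInv d q (Fin.last d) := by rw [h]
  rw [stereoInv_last, stereoInv_last, div_eq_div_iff (ne_of_gt hNp) (ne_of_gt hNq)] at hlast
  have hnorm : ‖p‖ ^ 2 = ‖q‖ ^ 2 := by nlinarith
  ext i
  have hi : stereoInv d p (Fin.castSucc i) = stereoInv d q (Fin.castSucc i) := by rw [h]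
  rw [stereoInv_castSucc, stereoInv_castSucc, hnorm] at hi
  rw [div_eq_div_iff (ne_of_gt hNq) (ne_of_gt hNq)] at hi
  nlinarith

lemma stereoInv_ne_pole (d : ℕ) (p : EuclideanSpace ℝ (Fin d)) :
    stereoInv d p ≠ EuclideanSpace.single (Fin.last d) (1 : ℝ) := by
  intro h
  have hN : (0:ℝ) < ‖p‖ ^ 2 + 4 := by positivity
  have : stereoInv d p (Fin.last d) = EuclideanSpace.single (Fin.last d) (1 : ℝ) (Fin.last d) := by rw [h]
  rw [stereoInv_last] at this
  simp [EuclideanSpace.single_apply] at this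
  rw [div_eq_one_iff_eq (ne_of_gt hN)] at this
  linarith

/-- `S` is (the vertex set of) a face of the polytope with vertex set `W`: some linear
functional ⟨·,v⟩ is at most r on W, with equality exactly on S. (Taking v = 0 allows the
improper face W itself; taking r beyond the maximum allows the empty face.) -/
def IsVertexFace {E : Type*} [NormedAddCommGroup E] [InnerProductSpace ℝ E]
    (W S : Set E) : Prop :=
  ∃ (v : E) (r : ℝ), (∀ x ∈ W, (inner ℝ x v : ℝ) ≤ r) ∧
    ∀ x ∈ W, ((inner ℝ x v : ℝ) = r ↔ x ∈ S)

/-- Brown's correspondence (unit ball, face-of-hull direction): for a finite configuration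
A ⊆ ℝ^d and P_A = conv({c} ∪ σ⁻¹(A)), where c is the north pole and σ the stereographic
projection from c, a subset S ⊆ A has conv(σ⁻¹(S) ∪ {c}) a face of P_A if and only if
conv(S) is a face of conv(A). -/
theorem brown_correspondence_upper_faces (d : ℕ)
    (A S : Finset (EuclideanSpace ℝ (Fin d))) (hS : S ⊆ A) :
    IsVertexFace
      ({EuclideanSpace.single (Fin.last d) (1 : ℝ)} ∪
        stereoInv d '' (A : Set (EuclideanSpace ℝ (Fin d))))
      ({EuclideanSpace.single (Fin.last d) (1 : ℝ)} ∪
        stereoInv d '' (S : Set (EuclideanSpace ℝ (Fin d)))) ↔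
    IsVertexFace (A : Set (EuclideanSpace ℝ (Fin d)))
      (S : Set (EuclideanSpace ℝ (Fin d))) := by
  constructor
  · rintro ⟨V, R, hle, heq⟩
    set c : EuclideanSpace ℝ (Fin (d+1)) := EuclideanSpace.single (Fin.last d) (1 : ℝ) with hc
    have hcW : c ∈ ({c} : Set _) ∪ stereoInv d '' (A : Set _) := Or.inl rfl
    have hcR : (inner ℝ c V : ℝ) = R := (heq c hcW).mpr (Or.inl rfl)
    have hcV : V (Fin.last d) = R := by
      rw [← hcR, hc, EuclideanSpace.inner_single_left]
      simp
    set v : EuclideanSpace ℝ (Fin d) := WithLp.toLp 2 (fun i => V (Fin.castSucc i)) with hv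
    have key : ∀ p : EuclideanSpace ℝ (Fin d),
        (inner ℝ (stereoInv d p) V : ℝ) = R + (4 / (‖p‖ ^ 2 + 4)) * ((inner ℝ p v : ℝ) - 2 * R) := by
      intro p
      rw [inner_stereoInv, hcV]
    refine ⟨v, 2 * R, ?_, ?_⟩
    · intro a ha
      have h1 := hle (stereoInv d a) (Or.inr ⟨a, ha, rfl⟩)
      rw [key] at h1
      have hN : (0:ℝ) < 4 / (‖a‖ ^ 2 + 4) := by positivity
      nlinarith
    · intro a ha
      have hN : (0:ℝ) < 4 / (‖a‖ ^ 2 + 4) := by positivity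
      constructor
      · intro h
        have h1 : (inner ℝ (stereoInv d a) V : ℝ) = R := by rw [key, h]; ring
        rcases (heq (stereoInv d a) (Or.inr ⟨a, ha, rfl⟩)).mp h1 with h2 | ⟨b, hb, h2⟩
        · exact absurd h2 (stereoInv_ne_pole d a)
        · exact (stereoInv_injective d h2) ▸ hb
      · intro h
        have h1 : (inner ℝ (stereoInv d a) V : ℝ) = R :=
          (heq (stereoInv d a) (Or.inr ⟨a, ha, rfl⟩)).mpr (Or.inr ⟨a, h, rfl⟩)
        rw [key] at h1
        have h2 : (4 / (‖a‖ ^ 2 + 4)) * ((inner ℝ a v : ℝ) - 2 * R) = 0 := by linarith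
        rcases mul_eq_zero.mp h2 with h3 | h3
        · exact absurd h3 (ne_of_gt hN)
        · linarith
  · rintro ⟨v, r, hle, heq⟩
    set c : EuclideanSpace ℝ (Fin (d+1)) := EuclideanSpace.single (Fin.last d) (1 : ℝ) with hc
    set V : EuclideanSpace ℝ (Fin (d+1)) :=
      WithLp.toLp 2 (fun i : Fin (d+1) => if h : (i : ℕ) < d then v ⟨(i : ℕ), h⟩ else r / 2) with hV
    have hVlast : V (Fin.last d) = r / 2 := by simp [hV]
    have hVcast : (WithLp.toLp 2 (fun i => V (Fin.castSucc i)) : EuclideanSpace ℝ (Fin d)) = v := by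
      ext i; simp [hV, i.isLt]
    have key : ∀ p : EuclideanSpace ℝ (Fin d),
        (inner ℝ (stereoInv d p) V : ℝ) = r / 2 + (4 / (‖p‖ ^ 2 + 4)) * ((inner ℝ p v : ℝ) - r) := by
      intro p
      rw [inner_stereoInv, hVlast, hVcast]
      ring_nf
    have hcV : (inner ℝ c V : ℝ) = r / 2 := by
      rw [hc, EuclideanSpace.inner_single_left]
      simp [hVlast]
    refine ⟨V, r / 2, ?_, ?_⟩
    · rintro x (rfl | ⟨a, ha, rfl⟩)
      · rw [hcV]
      · rw [key]
        have hN : (0:ℝ) < 4 / (‖a‖ ^ 2 + 4) := by positivity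
        have := hle a ha
        nlinarith
    · rintro x (rfl | ⟨a, ha, rfl⟩)
      · simp [hcV]
      · have hN : (0:ℝ) < 4 / (‖a‖ ^ 2 + 4) := by positivity
        rw [key]
        constructor
        · intro h
          have h2 : (4 / (‖a‖ ^ 2 + 4)) * ((inner ℝ a v : ℝ) - r) = 0 := by linarith
          rcases mul_eq_zero.mp h2 with h3 | h3
          · exact absurd h3 (ne_of_gt hN)
          · have : (inner ℝ a v : ℝ) = r := by linarith
            exact Or.inr ⟨a, (heq a ha).mp this, rfl⟩
        · rintro (h | ⟨b, hb, h⟩)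
          · exact absurd h (stereoInv_ne_pole d a)
          · have hab : b = a := stereoInv_injective d h
            have : (inner ℝ a v : ℝ) = r := (heq a ha).mpr (hab ▸ hb)
            rw [this]; ring
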